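/- arXiv:0704.0942 — 2 statements merged into one kernel-verified Lean document; each statement's English description precedes it below -/
import Mathlib

section
/- Let q_z(w) = w² + 2(2-z) and fix r = 1/16 and δ' < 1/4. Let z ∈ ℂ with |Re z - 2| ≤ r and |Im z| ≤ r, suppose additionally |Im z| < δ'/4. Then for every w with |Re w| ≤ 1/4 and |Im w| ≤ δ', the image w₁ = q_z(w) satisfies |Im w₁| < δ' and |Re w₁| < 1/4. -/
open Complex

/-- For `q_z(w) = w² + 2(2-z)`, `r = 1/16`, `δ' < 1/4`: if
`|Re z - 2| ≤ r`, `|Im z| ≤ r`, and `|Im z| < δ'/4`, then for every `w` with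
`|Re w| ≤ 1/4` and `|Im w| ≤ δ'`, the image `w₁ = q_z(w)` satisfies
`|Im w₁| < δ'` and `|Re w₁| < 1/4`. -/
theorem stmt6 (δ' : ℝ) (hδ0 : 0 < δ') (hδ : δ' < 1 / 4) (z : ℂ)
    (hz1 : |z.re - 2| ≤ 1 / 16) (hz2 : |z.im| ≤ 1 / 16) (hz3 : |z.im| < δ' / 4) :
    ∀ w : ℂ, |w.re| ≤ 1 / 4 → |w.im| ≤ δ' →
      |(w ^ 2 + 2 * (2 - z)).im| < δ' ∧ |(w ^ 2 + 2 * (2 - z)).re| < 1 / 4 := by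
  intro w hx hy
  rw [abs_le] at hx hy hz1 hz2
  rw [abs_lt] at hz3
  simp only [pow_two, Complex.add_im, Complex.add_re, Complex.mul_im, Complex.mul_re,
    Complex.sub_im, Complex.sub_re, Complex.re_ofNat, Complex.im_ofNat]
  obtain ⟨hx1,hx2⟩ := hx; obtain ⟨hy1,hy2⟩ := hy; obtain ⟨hz31,hz32⟩ := hz3
  constructor <;> rw [abs_lt] <;> constructor <;> nlinarith [sq_nonneg w.re, sq_nonneg w.im,
    sq_nonneg (w.re - w.im), sq_nonneg (w.re + w.im), sq_nonneg (δ' - 1/4)]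
end

section
/- Suppose f : X → X is continuous on a compact metric space, T ⊆ X is closed with f(T) ⊆ T, and there exist m₀ ∈ ℕ and r₀ > 0 such that f^m(N(T,r)) ⊆ N(T, r/2) for all m ≥ m₀ and 0 < r ≤ r₀, where N(T,r) is the open r-neighborhood of T. Then every point x ∈ N(T, r₀) satisfies A({x}) ⊆ T, i.e., the ω-limit set of x is contained in T. -/
open Metric

/-- If `f : X → X` is continuous on a compact metric space, `T` is closed
with `f(T) ⊆ T`, and there are `m₀ ∈ ℕ`, `r₀ > 0` such that
`f^m(N(T,r)) ⊆ N(T, r/2)` for all `m ≥ m₀` and `0 < r ≤ r₀`, then the ω-limit set of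
every point `x ∈ N(T, r₀)` is contained in `T`. -/
theorem stmt14 {X : Type*} [MetricSpace X] [CompactSpace X] (f : X → X) (hf : Continuous f)
    (T : Set X) (hT : IsClosed T) (hfT : f '' T ⊆ T) (m₀ : ℕ) (r₀ : ℝ) (hr₀ : 0 < r₀)
    (htrap : ∀ m ≥ m₀, ∀ r : ℝ, 0 < r → r ≤ r₀ →
      f^[m] '' Metric.thickening r T ⊆ Metric.thickening (r / 2) T) :
    ∀ x ∈ Metric.thickening r₀ T,
      (⋂ N : ℕ, closure {y | ∃ n ≥ N, y = f^[n] x}) ⊆ T := by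
  intro x hx y hy
  have hTne : T.Nonempty := by
    rcases T.eq_empty_or_nonempty with rfl | h
    · simp [Metric.thickening_empty] at hx
    · exact h
  set m := max m₀ 1 with hmdef
  have hm0 : m₀ ≤ m := le_max_left _ _
  have hrpos : ∀ k : ℕ, 0 < r₀ / 2 ^ k := fun k => by positivity
  have hrle : ∀ k : ℕ, r₀ / 2 ^ k ≤ r₀ := fun k =>
    div_le_self hr₀.le (one_le_pow₀ one_le_two)
  -- key: iterates at times k*m stay in shrinking thickenings
  have key : ∀ k : ℕ, f^[k * m] x ∈ Metric.thickening (r₀ / 2 ^ k) T := by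
    intro k
    induction k with
    | zero => simpa using hx
    | succ k ih =>
      have h2 := htrap m hm0 _ (hrpos k) (hrle k) ⟨_, ih, rfl⟩
      rw [← Function.iterate_add_apply] at h2
      have heq : m + k * m = (k + 1) * m := by ring
      rw [heq] at h2
      have : r₀ / 2 ^ k / 2 = r₀ / 2 ^ (k + 1) := by
        rw [div_div, ← pow_succ]
      rwa [this] at h2
  -- for each k, all sufficiently late iterates lie in thickening (r₀ / 2^(k+1))
  have key2 : ∀ k : ℕ, Metric.infDist y T ≤ r₀ / 2 ^ (k + 1) := by
    intro k
    have hsub : {z | ∃ n ≥ k * m + m₀, z = f^[n] x} ⊆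
        Metric.thickening (r₀ / 2 ^ (k + 1)) T := by
      rintro z ⟨n, hn, rfl⟩
      obtain ⟨q, hq⟩ : ∃ q, n = q + k * m := ⟨n - k * m, by omega⟩
      have hqm : m₀ ≤ q := by omega
      have h2 := htrap q hqm _ (hrpos k) (hrle k) ⟨_, key k, rfl⟩
      rw [← Function.iterate_add_apply, ← hq] at h2
      have : r₀ / 2 ^ k / 2 = r₀ / 2 ^ (k + 1) := by
        rw [div_div, ← pow_succ]
      rwa [this] at h2
    have hclosure : closure {z | ∃ n ≥ k * m + m₀, z = f^[n] x} ⊆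
        Metric.cthickening (r₀ / 2 ^ (k + 1)) T :=
      closure_minimal (hsub.trans (Metric.thickening_subset_cthickening _ _))
        Metric.isClosed_cthickening
    have hy' : y ∈ Metric.cthickening (r₀ / 2 ^ (k + 1)) T :=
      hclosure (by exact Set.mem_iInter.1 hy (k * m + m₀))
    rw [Metric.mem_cthickening_iff] at hy'
    exact ENNReal.toReal_le_of_le_ofReal (hrpos (k + 1)).le hy'
  have h0 : Metric.infDist y T ≤ 0 := by
    by_contra h
    push_neg at h
    obtain ⟨k, hk⟩ := exists_pow_lt_of_lt_one (div_pos h hr₀) (by norm_num : (1:ℝ)/2 < 1)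
    have : r₀ / 2 ^ (k + 1) < Metric.infDist y T := by
      have h2 : ((1:ℝ)/2) ^ k = 1 / 2 ^ k := by
        rw [div_pow, one_pow]
      rw [h2, div_lt_div_iff₀ (by positivity) hr₀] at hk
      rw [div_lt_iff₀ (by positivity), pow_succ]
      nlinarith [pow_pos (by norm_num : (0:ℝ) < 2) k]
    exact absurd (key2 k) (not_le.2 this)
  have := Metric.infDist_nonneg (s := T) (x := y)
  exact (hT.mem_iff_infDist_zero hTne).2 (le_antisymm h0 this)
end
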